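/- arXiv:2509.07657 — 2 statements merged into one kernel-verified Lean document; each statement's English description precedes it below -/
import Mathlib

section
/- Let (Ω, μ) be a probability space, r ≥ 1, and let Z ∈ L^r(μ) be a real-valued random variable. Then ‖ω₁(|Z|)‖_{L^r} ≤ 2 ω₁(‖Z‖_{L^r}). -/
open MeasureTheory

/-- `ℓ(t) = -log t` for `0 < t ≤ 1/3` and `ℓ(t) = log 3` for `t ≥ 1/3`. -/
noncomputable def ell (t : ℝ) : ℝ := if t ≤ 1/3 then -Real.log t else Real.log 3

/-- `ω_q(t) = (t ℓ(t))^q` for `t > 0` and `ω_q(0) = 0`. -/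
noncomputable def omegaQ (q t : ℝ) : ℝ := if t = 0 then 0 else (t * ell t) ^ q

/-! Write `M = ‖Z‖_{L^r}` and use `ℓ = max (log 3) (-log)` on `(0, ∞)`. From `log x ≤ x - 1` one
gets `ℓ(s) ≤ ℓ(M) + M / s`, hence `ω₁(s) ≤ ℓ(M) (s + M)` since `ℓ ≥ 1`. Minkowski's inequality
on the probability space then bounds `‖ω₁(|Z|)‖_{L^r}` by `ℓ(M) (M + M) = 2 ω₁(M)`. -/

section RealLpNorm

variable {Ω : Type*} [MeasurableSpace Ω] {μ : Measure Ω} {r : ℝ}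

theorem MeasureTheory.MemLp.integral_abs_rpow_rpow_inv_eq {f : Ω → ℝ} (hr : 0 < r)
    (hf : MemLp f (ENNReal.ofReal r) μ) :
    (∫ ω, |f ω| ^ r ∂μ) ^ (1 / r) = (eLpNorm f (ENNReal.ofReal r) μ).toReal := by
  rw [hf.eLpNorm_eq_integral_rpow_norm (by simpa using hr) ENNReal.ofReal_ne_top,
    ENNReal.toReal_ofReal (by positivity), ENNReal.toReal_ofReal hr.le, one_div]
  rfl

theorem MeasureTheory.MemLp.ae_eq_zero_of_integral_abs_rpow_rpow_inv_eq_zero {f : Ω → ℝ}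
    (hr : 0 < r) (hf : MemLp f (ENNReal.ofReal r) μ)
    (h : (∫ ω, |f ω| ^ r ∂μ) ^ (1 / r) = 0) :
    f =ᵐ[μ] 0 := by
  rw [hf.integral_abs_rpow_rpow_inv_eq hr, ENNReal.toReal_eq_zero_iff] at h
  exact (eLpNorm_eq_zero_iff hf.1 (by simpa using hr)).1 (h.resolve_right hf.eLpNorm_ne_top)

lemma integral_abs_rpow_rpow_inv_le_of_abs_le [IsProbabilityMeasure μ] {f g : Ω → ℝ} {a b : ℝ}
    (hr : 1 ≤ r) (hf : AEStronglyMeasurable f μ) (hg : MemLp g (ENNReal.ofReal r) μ)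
    (ha : 0 ≤ a) (hb : 0 ≤ b) (hfg : ∀ᵐ ω ∂μ, |f ω| ≤ a * |g ω| + b) :
    (∫ ω, |f ω| ^ r ∂μ) ^ (1 / r) ≤ a * (∫ ω, |g ω| ^ r ∂μ) ^ (1 / r) + b := by
  set p := ENNReal.ofReal r
  have hr0 : 0 < r := by linarith
  have hp0 : p ≠ 0 := by simpa [p] using hr0
  have hp1 : 1 ≤ p := by simpa [p] using hr
  have hgp : MemLp (fun ω => a * |g ω|) p μ := hg.abs.const_mul a
  have hfp : MemLp f p μ := by
    refine (hgp.add (memLp_const b)).of_le hf ?_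
    filter_upwards [hfg] with ω hω
    exact hω.trans (le_abs_self _)
  have h_minkowski : eLpNorm f p μ ≤ ENNReal.ofReal a * eLpNorm g p μ + ENNReal.ofReal b :=
    calc eLpNorm f p μ ≤ eLpNorm (fun ω => a * |g ω| + b) p μ :=
          eLpNorm_mono_ae_real (by simpa only [Real.norm_eq_abs] using hfg)
      _ ≤ eLpNorm (fun ω => a * |g ω|) p μ + eLpNorm (fun _ => b) p μ :=
          eLpNorm_add_le hgp.1 aestronglyMeasurable_const hp1
      _ = ENNReal.ofReal a * eLpNorm g p μ + ENNReal.ofReal b := by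
          rw [show (fun ω => a * |g ω|) = a • fun ω => ‖g ω‖ from rfl, eLpNorm_const_smul,
            eLpNorm_norm, eLpNorm_const b hp0 (NeZero.ne μ), Real.enorm_of_nonneg ha,
            Real.enorm_of_nonneg hb]
          simp
  rw [hfp.integral_abs_rpow_rpow_inv_eq hr0, hg.integral_abs_rpow_rpow_inv_eq hr0]
  refine ENNReal.toReal_le_of_le_ofReal (by positivity) (h_minkowski.trans_eq ?_)
  rw [ENNReal.ofReal_add (by positivity) hb, ENNReal.ofReal_mul ha,
    ENNReal.ofReal_toReal hg.eLpNorm_ne_top]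

end RealLpNorm

lemma one_lt_log_three : 1 < Real.log 3 := by
  rw [Real.lt_log_iff_exp_lt (by norm_num)]
  exact Real.exp_one_lt_d9.trans (by norm_num)

lemma ell_eq_max {t : ℝ} (ht : 0 < t) : ell t = max (Real.log 3) (-Real.log t) := by
  have h_third : Real.log (1 / 3) = -Real.log 3 := by rw [one_div, Real.log_inv]
  unfold ell
  split_ifs with h
  · have := Real.log_le_log ht h
    rw [max_eq_right (by linarith)]
  · have := Real.log_le_log (by norm_num) (not_le.1 h).le
    rw [max_eq_left (by linarith)]

lemma log_three_le_ell {t : ℝ} (ht : 0 < t) : Real.log 3 ≤ ell t :=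
  (ell_eq_max ht).symm ▸ le_max_left _ _

lemma neg_log_le_ell {t : ℝ} (ht : 0 < t) : -Real.log t ≤ ell t :=
  (ell_eq_max ht).symm ▸ le_max_right _ _

lemma one_le_ell {t : ℝ} (ht : 0 < t) : 1 ≤ ell t :=
  one_lt_log_three.le.trans (log_three_le_ell ht)

lemma ell_nonneg {t : ℝ} (ht : 0 ≤ t) : 0 ≤ ell t := by
  rcases ht.eq_or_lt with rfl | ht
  · simp [ell]
  · exact zero_le_one.trans (one_le_ell ht)

lemma ell_le_add_div {s M : ℝ} (hs : 0 < s) (hM : 0 < M) : ell s ≤ ell M + M / s := by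
  have hMs : 0 ≤ M / s := by positivity
  rw [ell_eq_max hs]
  refine max_le (by linarith [log_three_le_ell hM]) ?_
  have h_log_div : Real.log (M / s) ≤ M / s - 1 := Real.log_le_sub_one_of_pos (by positivity)
  rw [Real.log_div hM.ne' hs.ne'] at h_log_div
  linarith [neg_log_le_ell hM]

lemma measurable_ell : Measurable ell :=
  Measurable.ite measurableSet_Iic Real.measurable_log.neg measurable_const

lemma omegaQ_one (t : ℝ) : omegaQ 1 t = t * ell t := by
  unfold omegaQ
  split_ifs with h <;> simp [h]

lemma omegaQ_one_nonneg {t : ℝ} (ht : 0 ≤ t) : 0 ≤ omegaQ 1 t := by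
  rw [omegaQ_one]; exact mul_nonneg ht (ell_nonneg ht)

lemma omegaQ_one_le {s M : ℝ} (hs : 0 ≤ s) (hM : 0 < M) : omegaQ 1 s ≤ ell M * (s + M) := by
  rw [omegaQ_one]
  rcases hs.eq_or_lt with rfl | hs
  · simp only [zero_mul, zero_add]; exact mul_nonneg (ell_nonneg hM.le) hM.le
  · calc s * ell s ≤ s * (ell M + M / s) := mul_le_mul_of_nonneg_left (ell_le_add_div hs hM) hs.le
      _ = ell M * s + M := by field_simp
      _ ≤ ell M * (s + M) := by nlinarith [one_le_ell hM]

lemma measurable_omegaQ_one : Measurable (omegaQ 1) :=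
  funext omegaQ_one ▸ measurable_id.mul measurable_ell

/-- for a probability space `(Ω, μ)`, `r ≥ 1` and `Z ∈ L^r(μ)` real-valued,
`‖ω₁(|Z|)‖_{L^r} ≤ 2 ω₁(‖Z‖_{L^r})`, where `‖Z‖_{L^r} = (∫ |Z|^r dμ)^{1/r}`. -/
theorem omegaQ_one_Lr_bound {Ω : Type*} [MeasurableSpace Ω] (μ : Measure Ω)
    [IsProbabilityMeasure μ] (r : ℝ) (hr : 1 ≤ r) (Z : Ω → ℝ)
    (hZ : MemLp Z (ENNReal.ofReal r) μ) :
    (∫ ω, omegaQ 1 |Z ω| ^ r ∂μ) ^ (1/r) ≤ 2 * omegaQ 1 ((∫ ω, |Z ω| ^ r ∂μ) ^ (1/r)) := by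
  set M := (∫ ω, |Z ω| ^ r ∂μ) ^ (1 / r)
  have hM0 : 0 ≤ M := by positivity
  have habs (ω : Ω) : |(omegaQ 1 |Z ω|)| = omegaQ 1 |Z ω| :=
    abs_of_nonneg (omegaQ_one_nonneg (abs_nonneg _))
  have hbound : ∀ᵐ ω ∂μ, |(omegaQ 1 |Z ω|)| ≤ ell M * |Z ω| + ell M * M := by
    rcases hM0.eq_or_lt with hM | hM
    · filter_upwards [hZ.ae_eq_zero_of_integral_abs_rpow_rpow_inv_eq_zero (by linarith) hM.symm]
        with ω hω
      simp [hω, omegaQ_one, ← hM]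
    · refine ae_of_all _ fun ω => ?_
      rw [habs, ← mul_add]
      exact omegaQ_one_le (abs_nonneg _) hM
  have hmeas : AEStronglyMeasurable (fun ω => omegaQ 1 |Z ω|) μ :=
    ((measurable_omegaQ_one.comp continuous_abs.measurable).comp_aemeasurable
      hZ.1.aemeasurable).aestronglyMeasurable
  calc (∫ ω, omegaQ 1 |Z ω| ^ r ∂μ) ^ (1 / r) = (∫ ω, |(omegaQ 1 |Z ω|)| ^ r ∂μ) ^ (1 / r) := by
        simp_rw [habs]
    _ ≤ ell M * M + ell M * M := integral_abs_rpow_rpow_inv_le_of_abs_le hr hmeas hZ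
        (ell_nonneg hM0) (mul_nonneg (ell_nonneg hM0) hM0) hbound
    _ = 2 * omegaQ 1 M := by rw [omegaQ_one]; ring
end

section
/- Let (M, d) be a metric space of finite diameter and C₀ ≥ 1. Let Ψ: [0,∞) × M → M be a semiflow (Ψ_0 = id, Ψ_{t+s} = Ψ_t ∘ Ψ_s) such that d(Ψ_t x, Ψ_t y) ≤ C₀ d(x,y) for all t ∈ [0,1] and x,y ∈ M, and d(Ψ_t x, Ψ_s x) ≤ C₀ |t − s| for all s,t ≥ 0 and x ∈ M. Let η ∈ (0,1], X ⊆ M, let h: X → [1,∞) be bounded and η-Hölder (there is K > 0 with |h(x) − h(y)| ≤ K d(x,y)^η for x,y ∈ X), and let v: M → ℝ be bounded and η-Hölder. Then the function ṽ: X → ℝ defined by ṽ(x) = ∫_0^{h(x)} v(Ψ_u x) du is η-Hölder on X, i.e. there is a constant K' > 0 such that |ṽ(x) − ṽ(y)| ≤ K' d(x,y)^η for all x, y ∈ X. -/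
/-!
Split `ṽ x - ṽ y` as `∫₀^{h y} (v (Ψ_u x) - v (Ψ_u y)) du + ∫_{h y}^{h x} v (Ψ_u x) du`.
Iterating the Lipschitz bound of `Ψ` over `[0,1]` gives `d(Ψ_u x, Ψ_u y) ≤ C₀ⁿ d(x,y)` for
`u ≤ n`, so, `h` being bounded, the first integrand is uniformly `O(d(x,y)^η)`; the second
integral is at most `sup |v| · |h x - h y| = O(d(x,y)^η)`.
-/

open MeasureTheory Set Filter Topology Interval

theorem continuous_of_dist_le_mul_rpow {X Y : Type*} [PseudoMetricSpace X] [PseudoMetricSpace Y]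
    {f : X → Y} {C r : ℝ} (hr : 0 < r) (hf : ∀ x y, dist (f x) (f y) ≤ C * dist x y ^ r) :
    Continuous f := by
  refine continuous_iff_continuousAt.2 fun x => tendsto_iff_dist_tendsto_zero.2 <|
    squeeze_zero (fun _ => dist_nonneg) (fun y => hf y x) ?_
  have : Tendsto (fun y => C * dist y x ^ r) (𝓝 x) (𝓝 (C * dist x x ^ r)) :=
    ((continuous_id.dist continuous_const).rpow_const fun _ => Or.inr hr.le).const_mul C |>.tendsto x
  simpa [Real.zero_rpow hr.ne'] using this

theorem norm_integral_sub_integral_le {E : Type*} [NormedAddCommGroup E] [NormedSpace ℝ E]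
    {f g : ℝ → E} {a b A B : ℝ} (hfa : IntervalIntegrable f volume 0 a)
    (hfb : IntervalIntegrable f volume 0 b) (hgb : IntervalIntegrable g volume 0 b)
    (hfg : ∀ u ∈ Ι 0 b, ‖f u - g u‖ ≤ A) (hf : ∀ u, ‖f u‖ ≤ B) :
    ‖(∫ u in 0..a, f u) - ∫ u in 0..b, g u‖ ≤ A * |b| + B * |a - b| := by
  have hsplit : (∫ u in 0..a, f u) - ∫ u in 0..b, g u
      = (∫ u in 0..b, f u - g u) + ∫ u in b..a, f u := by
    rw [intervalIntegral.integral_sub hfb hgb,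
      ← intervalIntegral.integral_add_adjacent_intervals hfb (hfb.symm.trans hfa)]
    abel
  calc ‖(∫ u in 0..a, f u) - ∫ u in 0..b, g u‖
      ≤ ‖∫ u in 0..b, f u - g u‖ + ‖∫ u in b..a, f u‖ := hsplit ▸ norm_add_le _ _
    _ ≤ A * |b - 0| + B * |a - b| := add_le_add
        (intervalIntegral.norm_integral_le_of_norm_le_const hfg)
        (intervalIntegral.norm_integral_le_of_norm_le_const fun u _ => hf u)
    _ = A * |b| + B * |a - b| := by rw [sub_zero]

section Semiflow

variable {M : Type*} [PseudoMetricSpace M] {Ψ : ℝ → M → M} {C₀ : ℝ}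

theorem dist_semiflow_le_pow (hC₀ : 1 ≤ C₀) (hΨ0 : Ψ 0 = id)
    (hΨadd : ∀ s t : ℝ, 0 ≤ s → 0 ≤ t → Ψ (t + s) = Ψ t ∘ Ψ s)
    (hspace : ∀ t ∈ Icc (0:ℝ) 1, ∀ x y : M, dist (Ψ t x) (Ψ t y) ≤ C₀ * dist x y)
    (n : ℕ) {u : ℝ} (hu : u ∈ Icc (0:ℝ) n) (x y : M) :
    dist (Ψ u x) (Ψ u y) ≤ C₀ ^ n * dist x y := by
  induction n generalizing u with
  | zero =>
    obtain rfl : u = 0 := le_antisymm (by exact_mod_cast hu.2) hu.1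
    simp [hΨ0]
  | succ n ih =>
    rcases le_or_gt u n with hun | hnu
    · calc dist (Ψ u x) (Ψ u y) ≤ C₀ ^ n * dist x y := ih ⟨hu.1, hun⟩
        _ ≤ C₀ ^ (n + 1) * dist x y := by gcongr; omega
    · have hsplit : Ψ u = Ψ (u - n) ∘ Ψ n := by
        simpa using hΨadd n (u - n) n.cast_nonneg (by linarith)
      have hstep : u - n ∈ Icc (0:ℝ) 1 := ⟨by linarith, by push_cast at hu; linarith [hu.2]⟩
      calc dist (Ψ u x) (Ψ u y) ≤ C₀ * dist (Ψ n x) (Ψ n y) := by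
            simpa only [hsplit, Function.comp_apply] using hspace _ hstep _ _
        _ ≤ C₀ * (C₀ ^ n * dist x y) := by
            gcongr; exact ih ⟨n.cast_nonneg, le_rfl⟩
        _ = C₀ ^ (n + 1) * dist x y := by ring

theorem abs_sub_holder_comp_semiflow_le (hC₀ : 1 ≤ C₀) (hΨ0 : Ψ 0 = id)
    (hΨadd : ∀ s t : ℝ, 0 ≤ s → 0 ≤ t → Ψ (t + s) = Ψ t ∘ Ψ s)
    (hspace : ∀ t ∈ Icc (0:ℝ) 1, ∀ x y : M, dist (Ψ t x) (Ψ t y) ≤ C₀ * dist x y)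
    {v : M → ℝ} {Kv η : ℝ} (hKv : 0 ≤ Kv) (hη : 0 ≤ η)
    (hv : ∀ x y : M, |v x - v y| ≤ Kv * dist x y ^ η)
    (n : ℕ) {u : ℝ} (hu : u ∈ Icc (0:ℝ) n) (x y : M) :
    |v (Ψ u x) - v (Ψ u y)| ≤ Kv * (C₀ ^ n) ^ η * dist x y ^ η := by
  have hC₀n : 0 ≤ C₀ ^ n := pow_nonneg (by linarith) n
  calc |v (Ψ u x) - v (Ψ u y)| ≤ Kv * dist (Ψ u x) (Ψ u y) ^ η := hv _ _
    _ ≤ Kv * (C₀ ^ n * dist x y) ^ η := by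
        gcongr; exact dist_semiflow_le_pow hC₀ hΨ0 hΨadd hspace n hu x y
    _ = Kv * (C₀ ^ n) ^ η * dist x y ^ η := by
        rw [Real.mul_rpow hC₀n dist_nonneg, mul_assoc]

theorem intervalIntegrable_comp_semiflow
    (htime : ∀ s t : ℝ, 0 ≤ s → 0 ≤ t → ∀ x : M, dist (Ψ t x) (Ψ s x) ≤ C₀ * |t - s|)
    {v : M → ℝ} (hv : Continuous v) (x : M) {a b : ℝ} (ha : 0 ≤ a) (hb : 0 ≤ b) :
    IntervalIntegrable (fun u => v (Ψ u x)) volume a b := by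
  have horbit : LipschitzOnWith C₀.toNNReal (fun u => Ψ u x) (Ici 0) :=
    LipschitzOnWith.of_dist_le_mul fun s hs t ht =>
      (htime t s ht hs x).trans (by rw [Real.dist_eq]; gcongr; exact C₀.le_coe_toNNReal)
  refine ContinuousOn.intervalIntegrable ((hv.comp_continuousOn horbit.continuousOn).mono ?_)
  exact fun u hu => le_trans (le_min ha hb) hu.1

end Semiflow

theorem induced_observable_holder_general {M : Type*} [MetricSpace M]
    (C₀ : ℝ) (hC₀ : 1 ≤ C₀)
    (Ψ : ℝ → M → M) (hΨ0 : Ψ 0 = id)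
    (hΨadd : ∀ s t : ℝ, 0 ≤ s → 0 ≤ t → Ψ (t + s) = Ψ t ∘ Ψ s)
    (hspace : ∀ t ∈ Set.Icc (0:ℝ) 1, ∀ x y : M, dist (Ψ t x) (Ψ t y) ≤ C₀ * dist x y)
    (htime : ∀ s t : ℝ, 0 ≤ s → 0 ≤ t → ∀ x : M, dist (Ψ t x) (Ψ s x) ≤ C₀ * |t - s|)
    (η : ℝ) (hη : η ∈ Set.Ioc (0:ℝ) 1)
    (X : Set M) (h : M → ℝ) (hh1 : ∀ x ∈ X, 1 ≤ h x) (hhb : ∃ Ch : ℝ, ∀ x ∈ X, h x ≤ Ch)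
    (K : ℝ) (hK : 0 < K) (hhK : ∀ x ∈ X, ∀ y ∈ X, |h x - h y| ≤ K * dist x y ^ η)
    (v : M → ℝ) (hvb : ∃ Cv : ℝ, ∀ x : M, |v x| ≤ Cv)
    (Kv : ℝ) (hKv : 0 < Kv) (hv : ∀ x y : M, |v x - v y| ≤ Kv * dist x y ^ η) :
    ∃ K' : ℝ, 0 < K' ∧ ∀ x ∈ X, ∀ y ∈ X,
      |(∫ u in (0:ℝ)..(h x), v (Ψ u x)) - ∫ u in (0:ℝ)..(h y), v (Ψ u y)|
        ≤ K' * dist x y ^ η := by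
  obtain ⟨hη0, -⟩ := hη
  obtain ⟨Ch, hCh⟩ := hhb
  obtain ⟨Cv, hCv⟩ := hvb
  have hv_cont : Continuous v :=
    continuous_of_dist_le_mul_rpow hη0 fun x y => by simpa only [Real.dist_eq] using hv x y
  have hint := intervalIntegrable_comp_semiflow htime hv_cont
  set N := ⌈Ch⌉₊
  set B := Kv * (C₀ ^ N) ^ η
  refine ⟨(N + 1) * B + |Cv| * K, by positivity, fun x hx y hy => ?_⟩
  have hx0 : 0 ≤ h x := zero_le_one.trans (hh1 x hx)
  have hy0 : 0 ≤ h y := zero_le_one.trans (hh1 y hy)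
  have hyN : h y ≤ N := (hCh y hy).trans (Nat.le_ceil Ch)
  have hpointwise : ∀ u ∈ Ι 0 (h y), ‖v (Ψ u x) - v (Ψ u y)‖ ≤ B * dist x y ^ η := by
    intro u hu
    rw [uIoc_of_le hy0] at hu
    exact abs_sub_holder_comp_semiflow_le hC₀ hΨ0 hΨadd hspace hKv.le hη0.le hv N
      ⟨hu.1.le, hu.2.trans hyN⟩ x y
  calc |(∫ u in (0:ℝ)..(h x), v (Ψ u x)) - ∫ u in (0:ℝ)..(h y), v (Ψ u y)|
      ≤ B * dist x y ^ η * |h y| + |Cv| * |h x - h y| :=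
        norm_integral_sub_integral_le (hint x le_rfl hx0) (hint x le_rfl hy0) (hint y le_rfl hy0)
          hpointwise fun u => (hCv _).trans (le_abs_self Cv)
    _ ≤ B * dist x y ^ η * (N + 1) + |Cv| * (K * dist x y ^ η) := by
        gcongr
        · rw [abs_of_nonneg hy0]; linarith
        · exact hhK x hx y hy
    _ = ((N + 1) * B + |Cv| * K) * dist x y ^ η := by ring

/-- Let `(M,d)` be a metric space of finite diameter, `C₀ ≥ 1`, and
`Ψ` a semiflow on `M` which is Lipschitz in space for `t ∈ [0,1]` and Lipschitz in time.
Let `η ∈ (0,1]`, `X ⊆ M`, `h : X → [1,∞)` bounded and `η`-Hölder, and `v : M → ℝ`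
bounded and `η`-Hölder. Then `ṽ(x) = ∫_0^{h(x)} v(Ψ_u x) du` is `η`-Hölder on `X`. -/
theorem induced_observable_holder {M : Type*} [MetricSpace M]
    (hbdd : Bornology.IsBounded (Set.univ : Set M))
    (C₀ : ℝ) (hC₀ : 1 ≤ C₀)
    (Ψ : ℝ → M → M) (hΨ0 : Ψ 0 = id)
    (hΨadd : ∀ s t : ℝ, 0 ≤ s → 0 ≤ t → Ψ (t + s) = Ψ t ∘ Ψ s)
    (hspace : ∀ t ∈ Set.Icc (0:ℝ) 1, ∀ x y : M, dist (Ψ t x) (Ψ t y) ≤ C₀ * dist x y)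
    (htime : ∀ s t : ℝ, 0 ≤ s → 0 ≤ t → ∀ x : M, dist (Ψ t x) (Ψ s x) ≤ C₀ * |t - s|)
    (η : ℝ) (hη : η ∈ Set.Ioc (0:ℝ) 1)
    (X : Set M) (h : M → ℝ) (hh1 : ∀ x ∈ X, 1 ≤ h x) (hhb : ∃ Ch : ℝ, ∀ x ∈ X, h x ≤ Ch)
    (K : ℝ) (hK : 0 < K) (hhK : ∀ x ∈ X, ∀ y ∈ X, |h x - h y| ≤ K * dist x y ^ η)
    (v : M → ℝ) (hvb : ∃ Cv : ℝ, ∀ x : M, |v x| ≤ Cv)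
    (Kv : ℝ) (hKv : 0 < Kv) (hv : ∀ x y : M, |v x - v y| ≤ Kv * dist x y ^ η) :
    ∃ K' : ℝ, 0 < K' ∧ ∀ x ∈ X, ∀ y ∈ X,
      |(∫ u in (0:ℝ)..(h x), v (Ψ u x)) - ∫ u in (0:ℝ)..(h y), v (Ψ u y)|
        ≤ K' * dist x y ^ η :=
  induced_observable_holder_general C₀ hC₀ Ψ hΨ0 hΨadd hspace htime η hη X h hh1 hhb K hK hhK v hvb
    Kv hKv hv
end
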